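/- arXiv:1909.13188 — 2 statements merged into one kernel-verified Lean document; each statement's English description precedes it below -/
import Mathlib

section
/- For the Dirac LSGAN with discriminator D(x) = φx + 1/2, the Jacobian at the equilibrium (φ, θ) = (0, c) with c = 1 equals [[−4, −1], [1, 0]], and both of its eigenvalues are real and strictly negative (−2 ± √3), so the linearized dynamics is asymptotically stable. -/
/-- A complex number `μ` is an eigenvalue of a square complex matrix `M`. -/
def Matrix.HasEigval {n : ℕ} (M : Matrix (Fin n) (Fin n) ℂ) (μ : ℂ) : Prop :=
  ∃ v : Fin n → ℂ, v ≠ 0 ∧ M.mulVec v = μ • v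

/-- Dirac LSGAN dynamics (with `D(x) = φx + 1/2`, i.e. `h₁(x) = -(x-1/2)²`,
`h₂(x) = -(x+1/2)²`, `h₃(x) = -(x-1/2)²` and data point `c = 1`):
the discriminator update `f₁(φ,θ) = h₁'(φ·1)·1 + h₂'(φθ)·θ`. -/
noncomputable def lsganF1 (φ θ : ℝ) : ℝ := -2 * (φ * 1 - 1/2) * 1 + -2 * (φ * θ + 1/2) * θ

/-- Dirac LSGAN generator update `f₂(φ,θ) = h₃'(φθ)·φ`. -/
noncomputable def lsganF2 (φ θ : ℝ) : ℝ := -2 * (φ * θ - 1/2) * φ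

/-! The Jacobian `!![-4, -1; 1, 0]` is a companion matrix: `(μ, 1)` is an eigenvector exactly when
`μ² + 4μ + 1 = (μ + 2)² - 3` vanishes, so the eigenvalues are `-2 ± √3`, both real and negative
because `√3 < 2`. -/

section PartialDerivatives

variable (φ θ : ℝ)

theorem hasDerivAt_lsganF1_left : HasDerivAt (fun φ => lsganF1 φ θ) (-2 - 2 * θ ^ 2) φ := by
  have hf : (fun φ => lsganF1 φ θ) = fun φ => (-2 - 2 * θ ^ 2) * φ + (1 - θ) := by
    funext φ; simp only [lsganF1]; ring
  rw [hf]
  exact (((hasDerivAt_id' φ).const_mul _).add_const _).congr_deriv (mul_one _)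

theorem hasDerivAt_lsganF1_right : HasDerivAt (fun θ => lsganF1 φ θ) (-4 * φ * θ - 1) θ := by
  have hf : (fun θ => lsganF1 φ θ) = fun θ => -2 * φ * θ ^ 2 - θ + (1 - 2 * φ) := by
    funext θ; simp only [lsganF1]; ring
  rw [hf]
  exact ((((hasDerivAt_pow 2 θ).const_mul _).sub (hasDerivAt_id' θ)).add_const _).congr_deriv
    (by norm_num; ring)

theorem hasDerivAt_lsganF2_left : HasDerivAt (fun φ => lsganF2 φ θ) (-4 * φ * θ + 1) φ := by
  have hf : (fun φ => lsganF2 φ θ) = fun φ => -2 * θ * φ ^ 2 + φ := by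
    funext φ; simp only [lsganF2]; ring
  rw [hf]
  exact (((hasDerivAt_pow 2 φ).const_mul _).add (hasDerivAt_id' φ)).congr_deriv (by norm_num; ring)

theorem hasDerivAt_lsganF2_right : HasDerivAt (fun θ => lsganF2 φ θ) (-2 * φ ^ 2) θ := by
  have hf : (fun θ => lsganF2 φ θ) = fun θ => -2 * φ ^ 2 * θ + φ := by
    funext θ; simp only [lsganF2]; ring
  rw [hf]
  exact (((hasDerivAt_id' θ).const_mul _).add_const _).congr_deriv (mul_one _)

end PartialDerivatives

theorem Matrix.hasEigval_companion_iff (a b μ : ℂ) :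
    (!![a, b; 1, 0]).HasEigval μ ↔ μ ^ 2 = a * μ + b := by
  constructor
  · rintro ⟨v, hv, hmv⟩
    have h0 : a * v 0 + b * v 1 = μ * v 0 := by
      simpa [mulVec, dotProduct, Fin.sum_univ_two] using congrFun hmv 0
    have h1 : v 0 = μ * v 1 := by
      simpa [mulVec, dotProduct, Fin.sum_univ_two] using congrFun hmv 1
    have hv1 : v 1 ≠ 0 := by
      intro hv1
      exact hv (funext fun i => by fin_cases i <;> simp [h1, hv1])
    have hchar : (μ ^ 2 - (a * μ + b)) * v 1 = 0 := by linear_combination -h0 + (a - μ) * h1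
    exact sub_eq_zero.mp ((mul_eq_zero.mp hchar).resolve_right hv1)
  · intro h
    refine ⟨![μ, 1], fun hv => by simpa using congrFun hv 1, funext fun i => ?_⟩
    fin_cases i
    · simp only [mulVec, dotProduct, Fin.zero_eta, Fin.isValue, of_apply, cons_val',
        cons_val_fin_one, cons_val_zero, Fin.sum_univ_two, cons_val_one, mul_one, Pi.smul_apply,
        smul_eq_mul]
      linear_combination -h
    · simp [mulVec, dotProduct, Fin.sum_univ_two]

theorem sq_eq_neg_four_mul_add_neg_one_iff (μ : ℂ) :
    μ ^ 2 = -4 * μ + -1 ↔ μ = -2 + Real.sqrt 3 ∨ μ = -2 - Real.sqrt 3 := by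
  have hsqrt : ((Real.sqrt 3 : ℝ) : ℂ) ^ 2 = 3 := by
    norm_cast; exact Real.sq_sqrt (by norm_num)
  have hfactor : μ ^ 2 - (-4 * μ + -1) =
      (μ - (-2 + Real.sqrt 3)) * (μ - (-2 - Real.sqrt 3)) := by
    linear_combination hsqrt
  rw [← sub_eq_zero, hfactor, mul_eq_zero, sub_eq_zero, sub_eq_zero]

theorem neg_two_add_sqrt_three_neg : -2 + Real.sqrt 3 < 0 := by
  nlinarith [Real.sq_sqrt (show (0 : ℝ) ≤ 3 by norm_num), Real.sqrt_nonneg 3]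

/-- For the Dirac LSGAN with `D(x) = φx + 1/2`, the Jacobian of the dynamics at
the equilibrium `(φ, θ) = (0, 1)` equals `[[-4, -1], [1, 0]]`, and both of its
eigenvalues are real and strictly negative (namely `-2 ± √3`), so the
linearized dynamics is asymptotically stable. -/
theorem dirac_lsgan_jacobian_stable :
    deriv (fun φ => lsganF1 φ 1) 0 = -4 ∧
    deriv (fun θ => lsganF1 0 θ) 1 = -1 ∧
    deriv (fun φ => lsganF2 φ 1) 0 = 1 ∧
    deriv (fun θ => lsganF2 0 θ) 1 = 0 ∧
    (!![(-4 : ℂ), -1; 1, 0]).HasEigval (-2 + Real.sqrt 3) ∧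
    (!![(-4 : ℂ), -1; 1, 0]).HasEigval (-2 - Real.sqrt 3) ∧
    (∀ μ : ℂ, (!![(-4 : ℂ), -1; 1, 0]).HasEigval μ → μ.im = 0 ∧ μ.re < 0) := by
  simp only [Matrix.hasEigval_companion_iff, sq_eq_neg_four_mul_add_neg_one_iff]
  refine ⟨?_, ?_, ?_, ?_, by simp, by simp, ?_⟩
  · exact (hasDerivAt_lsganF1_left 0 1).deriv.trans (by norm_num)
  · exact (hasDerivAt_lsganF1_right 0 1).deriv.trans (by norm_num)
  · exact (hasDerivAt_lsganF2_left 0 1).deriv.trans (by norm_num)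
  · exact (hasDerivAt_lsganF2_right 0 1).deriv.trans (by norm_num)
  · have hplus := neg_two_add_sqrt_three_neg
    have hsqrt := Real.sqrt_nonneg 3
    rintro μ (rfl | rfl) <;> simp <;> linarith
end

section
/- Let h₁, h₂, h₃ : ℝ → ℝ be differentiable with h₁'(0) > 0, h₂'(0) < 0, h₃'(0) > 0 and |h₁'(0)| = |h₂'(0)| = |h₃'(0)| = a. Then the Jacobian of the Dirac GAN dynamics dφ/dt = h₁'(φc)c + h₂'(φθ)θ, dθ/dt = h₃'(φθ)φ at the equilibrium (φ, θ) = (0, c) with c = 1, assuming additionally h₁, h₂, h₃ are twice differentiable, has the form [[h₁''(0) + h₂''(0), −a], [a, 0]]; its trace is h₁''(0) + h₂''(0) and its determinant is a² > 0. Consequently the linearized dynamic is asymptotically stable if h₁''(0) + h₂''(0) < 0 and oscillatory (purely imaginary eigenvalues) if h₁''(0) + h₂''(0) = 0. -/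
open Polynomial

namespace Complex

variable {t d : ℝ} {z : ℂ}

theorem re_neg_of_sq_sub_mul_add_eq_zero (ht : t < 0) (hd : 0 < d)
    (hz : z ^ 2 - t * z + d = 0) : z.re < 0 := by
  have hre := congrArg re hz
  have him := congrArg im hz
  simp only [sq, add_re, sub_re, mul_re, add_im, sub_im, mul_im, ofReal_re, ofReal_im,
    zero_mul, add_zero, sub_zero, zero_re, zero_im] at hre him
  rcases mul_eq_zero.mp (by linear_combination him : z.im * (2 * z.re - t) = 0) with hy | hx
  · rw [hy] at hre
    nlinarith
  · linarith

theorem re_eq_zero_and_im_ne_zero_of_sq_add_eq_zero (hd : 0 < d) (hz : z ^ 2 + d = 0) :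
    z.re = 0 ∧ z.im ≠ 0 := by
  have hre := congrArg re hz
  have him := congrArg im hz
  simp only [sq, add_re, mul_re, add_im, mul_im, ofReal_re, ofReal_im, add_zero, zero_re,
    zero_im] at hre him
  have hy : z.im ≠ 0 := by
    rintro hy
    rw [hy] at hre
    nlinarith
  exact ⟨(mul_eq_zero.mp (by linear_combination him / 2 : z.re * z.im = 0)).resolve_right hy, hy⟩

end Complex

namespace Matrix.HasEigval

theorem isRoot_charpoly {n : ℕ} {M : Matrix (Fin n) (Fin n) ℂ} {μ : ℂ} (h : M.HasEigval μ) :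
    M.charpoly.IsRoot μ := by
  obtain ⟨v, hv, hMv⟩ := h
  rw [IsRoot, eval_charpoly, ← exists_mulVec_eq_zero_iff]
  exact ⟨v, hv, by ext; simp [sub_mulVec, hMv]⟩

variable {M : Matrix (Fin 2) (Fin 2) ℂ} {μ : ℂ} {t d : ℝ}

theorem sq_sub_trace_mul_add_det_eq_zero (h : M.HasEigval μ) :
    μ ^ 2 - M.trace * μ + M.det = 0 := by
  simpa [charpoly_fin_two] using h.isRoot_charpoly

theorem re_neg_of_trace_neg_of_det_pos (htr : M.trace = t) (hdet : M.det = d) (ht : t < 0)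
    (hd : 0 < d) (h : M.HasEigval μ) : μ.re < 0 :=
  Complex.re_neg_of_sq_sub_mul_add_eq_zero ht hd (htr ▸ hdet ▸ h.sq_sub_trace_mul_add_det_eq_zero)

theorem re_eq_zero_and_im_ne_zero_of_trace_eq_zero_of_det_pos (htr : M.trace = 0)
    (hdet : M.det = d) (hd : 0 < d) (h : M.HasEigval μ) : μ.re = 0 ∧ μ.im ≠ 0 :=
  Complex.re_eq_zero_and_im_ne_zero_of_sq_add_eq_zero hd <| by
    simpa [htr, hdet] using h.sq_sub_trace_mul_add_det_eq_zero

end Matrix.HasEigval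

theorem dirac_gan_general_jacobian_general (h₁ h₂ h₃ : ℝ → ℝ) (a : ℝ)
    (hc1 : ContDiff ℝ 2 h₁) (hc2 : ContDiff ℝ 2 h₂) (hc3 : ContDiff ℝ 2 h₃)
    (h2neg : deriv h₂ 0 < 0) (h3pos : 0 < deriv h₃ 0)
    (ha2 : |deriv h₂ 0| = a) (ha3 : |deriv h₃ 0| = a) :
    -- Jacobian entries at (φ, θ) = (0, 1)
    deriv (fun φ => deriv h₁ (φ * 1) * 1 + deriv h₂ (φ * 1) * 1) 0
        = deriv (deriv h₁) 0 + deriv (deriv h₂) 0 ∧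
    deriv (fun θ => deriv h₁ (0 * 1) * 1 + deriv h₂ (0 * θ) * θ) 1 = -a ∧
    deriv (fun φ => deriv h₃ (φ * 1) * φ) 0 = a ∧
    deriv (fun θ => deriv h₃ (0 * θ) * 0) 1 = 0 ∧
    -- trace and determinant of [[h₁''(0) + h₂''(0), -a], [a, 0]]
    Matrix.trace !![((deriv (deriv h₁) 0 + deriv (deriv h₂) 0 : ℝ) : ℂ), -(a : ℂ);
        (a : ℂ), 0] = ((deriv (deriv h₁) 0 + deriv (deriv h₂) 0 : ℝ) : ℂ) ∧
    Matrix.det !![((deriv (deriv h₁) 0 + deriv (deriv h₂) 0 : ℝ) : ℂ), -(a : ℂ);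
        (a : ℂ), 0] = ((a : ℂ)) ^ 2 ∧
    0 < a ^ 2 ∧
    (deriv (deriv h₁) 0 + deriv (deriv h₂) 0 < 0 →
      ∀ μ : ℂ, (!![((deriv (deriv h₁) 0 + deriv (deriv h₂) 0 : ℝ) : ℂ), -(a : ℂ);
        (a : ℂ), 0]).HasEigval μ → μ.re < 0) ∧
    (deriv (deriv h₁) 0 + deriv (deriv h₂) 0 = 0 →
      ∀ μ : ℂ, (!![((deriv (deriv h₁) 0 + deriv (deriv h₂) 0 : ℝ) : ℂ), -(a : ℂ);
        (a : ℂ), 0]).HasEigval μ → μ.re = 0 ∧ μ.im ≠ 0) := by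
  have hd₂ : deriv h₂ 0 = -a := by rw [← ha2, abs_of_neg h2neg, neg_neg]
  have hd₃ : deriv h₃ 0 = a := by rw [← ha3, abs_of_pos h3pos]
  have ha : 0 < a := hd₃ ▸ h3pos
  set t := deriv (deriv h₁) 0 + deriv (deriv h₂) 0
  set J : Matrix (Fin 2) (Fin 2) ℂ := !![(t : ℂ), -(a : ℂ); (a : ℂ), 0]
  have htr : J.trace = t := by simp [J, Matrix.trace_fin_two]
  have hdet : J.det = ((a ^ 2 : ℝ) : ℂ) := by simp [J, Matrix.det_fin_two_of, sq]
  refine ⟨?_, ?_, ?_, by simp, htr, by simpa using hdet, by positivity,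
    fun ht _ hμ => hμ.re_neg_of_trace_neg_of_det_pos htr hdet ht (by positivity),
    fun ht _ hμ => hμ.re_eq_zero_and_im_ne_zero_of_trace_eq_zero_of_det_pos
      (by simp [htr, ht]) hdet (by positivity)⟩
  · simpa only [mul_one] using deriv_fun_add hc1.differentiable_deriv_two.differentiableAt
      hc2.differentiable_deriv_two.differentiableAt
  · simp [hd₂]
  · simp only [mul_one]
    rw [deriv_fun_mul hc3.differentiable_deriv_two.differentiableAt differentiableAt_fun_id]
    simp [hd₃]

/-- General Dirac GAN with data point `c = 1`: with `h₁'(0) > 0`, `h₂'(0) < 0`,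
`h₃'(0) > 0` all of absolute value `a`, the Jacobian of the dynamics
`dφ/dt = h₁'(φ·1)·1 + h₂'(φθ)·θ`, `dθ/dt = h₃'(φθ)·φ` at the equilibrium
`(φ, θ) = (0, 1)` is `[[h₁''(0) + h₂''(0), -a], [a, 0]]`, with trace
`h₁''(0) + h₂''(0)` and determinant `a² > 0`; the linearized dynamic is
asymptotically stable if `h₁''(0) + h₂''(0) < 0` and oscillatory (purely
imaginary eigenvalues) if `h₁''(0) + h₂''(0) = 0`. -/
theorem dirac_gan_general_jacobian (h₁ h₂ h₃ : ℝ → ℝ) (a : ℝ)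
    (hc1 : ContDiff ℝ 2 h₁) (hc2 : ContDiff ℝ 2 h₂) (hc3 : ContDiff ℝ 2 h₃)
    (h1pos : 0 < deriv h₁ 0) (h2neg : deriv h₂ 0 < 0) (h3pos : 0 < deriv h₃ 0)
    (ha1 : |deriv h₁ 0| = a) (ha2 : |deriv h₂ 0| = a) (ha3 : |deriv h₃ 0| = a) :
    -- Jacobian entries at (φ, θ) = (0, 1)
    deriv (fun φ => deriv h₁ (φ * 1) * 1 + deriv h₂ (φ * 1) * 1) 0
        = deriv (deriv h₁) 0 + deriv (deriv h₂) 0 ∧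
    deriv (fun θ => deriv h₁ (0 * 1) * 1 + deriv h₂ (0 * θ) * θ) 1 = -a ∧
    deriv (fun φ => deriv h₃ (φ * 1) * φ) 0 = a ∧
    deriv (fun θ => deriv h₃ (0 * θ) * 0) 1 = 0 ∧
    -- trace and determinant of [[h₁''(0) + h₂''(0), -a], [a, 0]]
    Matrix.trace !![((deriv (deriv h₁) 0 + deriv (deriv h₂) 0 : ℝ) : ℂ), -(a : ℂ);
        (a : ℂ), 0] = ((deriv (deriv h₁) 0 + deriv (deriv h₂) 0 : ℝ) : ℂ) ∧
    Matrix.det !![((deriv (deriv h₁) 0 + deriv (deriv h₂) 0 : ℝ) : ℂ), -(a : ℂ);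
        (a : ℂ), 0] = ((a : ℂ)) ^ 2 ∧
    0 < a ^ 2 ∧
    (deriv (deriv h₁) 0 + deriv (deriv h₂) 0 < 0 →
      ∀ μ : ℂ, (!![((deriv (deriv h₁) 0 + deriv (deriv h₂) 0 : ℝ) : ℂ), -(a : ℂ);
        (a : ℂ), 0]).HasEigval μ → μ.re < 0) ∧
    (deriv (deriv h₁) 0 + deriv (deriv h₂) 0 = 0 →
      ∀ μ : ℂ, (!![((deriv (deriv h₁) 0 + deriv (deriv h₂) 0 : ℝ) : ℂ), -(a : ℂ);
        (a : ℂ), 0]).HasEigval μ → μ.re = 0 ∧ μ.im ≠ 0) :=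
  dirac_gan_general_jacobian_general h₁ h₂ h₃ a hc1 hc2 hc3 h2neg h3pos ha2 ha3
end
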